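/- Let $A, B, q : [0,T] \to \mathbb{R}^{n\times n}$ be $C^1$ with $q_t$ invertible for all $t$. Suppose $F : [0,T] \to \mathbb{R}^{n\times n}$ is $C^2$, satisfies $0 = (A_t - \dot B_t^T) F_t + (B_t - B_t^T - \dot q_t) \dot F_t - q_t \ddot F_t$ with $F_T = I$ and $B_T^T F_T + q_T \dot F_T = 0$, and $F_t$ is invertible for all $t \in [0,T]$. Define $\theta_t = -q_t \dot F_t F_t^{-1} - B_t^T$. Then $\theta_T = 0$ and $\theta$ satisfies the Riccati equation $A_t + \dot\theta_t = (B_t + \theta_t) q_t^{-1} (B_t^T + \theta_t)$. -/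

import Mathlib

/-!
Put `G = F⁻¹`. Then `θ = -q Ḟ G - Bᵀ`, and `Ġ = -G Ḟ G` gives
`θ̇ = -(q̇ Ḟ + q F̈) G + q Ḟ G Ḟ G - Ḃᵀ`. Multiplying the linear equation on the right by `G`
eliminates `q F̈ G`, and what remains is `-A + (B + θ) q⁻¹ (Bᵀ + θ)`, because `Bᵀ + θ = -q Ḟ G`.
The terminal value `θ T = 0` is the boundary condition at `T`, where `F T = 1`.
-/

open Matrix Set

attribute [local instance] Matrix.normedAddCommGroup Matrix.normedSpace

theorem HasDerivAt.ringInverse {𝕜 R : Type*} [NontriviallyNormedField 𝕜] [NormedRing R]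
    [HasSummableGeomSeries R] [NormedAlgebra 𝕜 R] {f : 𝕜 → R} {f' : R} {t : 𝕜}
    (hf : HasDerivAt f f' t) (hunit : IsUnit (f t)) :
    HasDerivAt (fun s => Ring.inverse (f s))
      (-(Ring.inverse (f t) * f' * Ring.inverse (f t))) t := by
  obtain ⟨u, hu⟩ := hunit
  have := (hu ▸ hasFDerivAt_ringInverse (𝕜 := 𝕜) u).comp_hasDerivAt t hf
  simpa [← hu, Function.comp_def, ContinuousLinearMap.mulLeftRight_apply] using this

section MatrixCalculus

variable {𝕜 m : Type*} [NontriviallyNormedField 𝕜] [Fintype m]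
  {f g : 𝕜 → Matrix m m 𝕜} {f' g' : Matrix m m 𝕜} {t : 𝕜}

theorem HasDerivAt.matrix_transpose [CompleteSpace 𝕜] (hf : HasDerivAt f f' t) :
    HasDerivAt (fun s => (f s)ᵀ) f'ᵀ t :=
  (transposeLinearEquiv m m 𝕜 𝕜).toContinuousLinearEquiv.hasFDerivAt.comp_hasDerivAt t hf

variable [DecidableEq m]

/- The `L∞` operator norm makes square matrices a normed algebra whose topology is
definitionally the entrywise one, so the derivative rules of normed algebras apply. -/

theorem HasDerivAt.matrix_mul (hf : HasDerivAt f f' t) (hg : HasDerivAt g g' t) :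
    HasDerivAt (fun s => f s * g s) (f' * g t + f t * g') t :=
  let := Matrix.linftyOpNormedRing (n := m) (α := 𝕜)
  let := Matrix.linftyOpNormedAlgebra (n := m) (R := 𝕜) (α := 𝕜)
  hf.mul hg

theorem HasDerivAt.matrix_inv [CompleteSpace 𝕜] (hf : HasDerivAt f f' t)
    (hunit : IsUnit (f t)) :
    HasDerivAt (fun s => (f s)⁻¹) (-((f t)⁻¹ * f' * (f t)⁻¹)) t := by
  let := Matrix.linftyOpNormedRing (n := m) (α := 𝕜)
  let := Matrix.linftyOpNormedAlgebra (n := m) (R := 𝕜) (α := 𝕜)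
  have : HasSummableGeomSeries (Matrix m m 𝕜) :=
    @instHasSummableGeomSeriesOfCompleteSpace _ _ (FiniteDimensional.complete 𝕜 _)
  simp only [nonsing_inv_eq_ringInverse]
  exact hf.ringInverse hunit

end MatrixCalculus

/-- `Bt`, `dBt`, `G`, `qinv` play the roles of `Bᵀ`, `Ḃᵀ`, `F⁻¹`, `q⁻¹`. -/
theorem riccati_of_linear_second_order {R : Type*} [Ring R]
    {A B Bt dBt q dq F dF ddF G qinv θ : R} (hFG : F * G = 1) (hq : qinv * q = 1)
    (hode : 0 = (A - dBt) * F + (B - Bt - dq) * dF - q * ddF)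
    (hθ : θ = -(q * dF * G) - Bt) :
    -((dq * dF + q * ddF) * G + q * dF * -(G * dF * G)) - dBt
      = -A + (B + θ) * qinv * (Bt + θ) := by
  have hode' : q * ddF * G = A - dBt + (B - Bt - dq) * dF * G := by
    calc q * ddF * G
        = ((A - dBt) * F + (B - Bt - dq) * dF) * G
          - ((A - dBt) * F + (B - Bt - dq) * dF - q * ddF) * G := by noncomm_ring
      _ = A - dBt + (B - Bt - dq) * dF * G := by
        rw [← hode, zero_mul, sub_zero, add_mul, mul_assoc _ F, hFG, mul_one]
  have hcancel : qinv * (q * dF * G) = dF * G := by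
    rw [← mul_assoc, ← mul_assoc, hq, one_mul]
  subst hθ
  calc -((dq * dF + q * ddF) * G + q * dF * -(G * dF * G)) - dBt
      = -A - (B - Bt) * (dF * G) + q * dF * G * (dF * G) := by
        rw [add_mul, hode']; noncomm_ring
    _ = -A + (B + (-(q * dF * G) - Bt)) * qinv * (Bt + (-(q * dF * G) - Bt)) := by
        rw [show Bt + (-(q * dF * G) - Bt) = -(q * dF * G) by abel, mul_neg, mul_assoc _ qinv,
          hcancel]
        noncomm_ring

theorem linear_to_riccati_general {n : ℕ} (T : ℝ)
    (A B q B' q' F F' F'' : ℝ → Matrix (Fin n) (Fin n) ℝ)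
    (hB : ∀ t ∈ Icc 0 T, HasDerivAt B (B' t) t)
    (hq : ∀ t ∈ Icc 0 T, HasDerivAt q (q' t) t)
    (hqinv : ∀ t ∈ Icc 0 T, IsUnit (q t))
    (hF : ∀ t ∈ Icc 0 T, HasDerivAt F (F' t) t)
    (hF' : ∀ t ∈ Icc 0 T, HasDerivAt F' (F'' t) t)
    (hFode : ∀ t ∈ Icc 0 T,
        0 = (A t - (B' t)ᵀ) * F t + (B t - (B t)ᵀ - q' t) * F' t - q t * F'' t)
    (hFT : F T = 1)
    (hbc : (B T)ᵀ * F T + q T * F' T = 0)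
    (hFinv : ∀ t ∈ Icc 0 T, IsUnit (F t))
    (θ : ℝ → Matrix (Fin n) (Fin n) ℝ)
    (hθdef : ∀ t, θ t = -(q t * F' t * (F t)⁻¹) - (B t)ᵀ) :
    θ T = 0 ∧
      ∀ t ∈ Icc 0 T,
        HasDerivAt θ (-(A t) + (B t + θ t) * (q t)⁻¹ * ((B t)ᵀ + θ t)) t := by
  refine ⟨?_, fun t ht => ?_⟩
  · rw [hFT, mul_one] at hbc
    rw [hθdef, hFT, inv_one, mul_one, ← neg_add', add_comm, hbc, neg_zero]
  · have hderiv := ((((hq t ht).matrix_mul (hF' t ht)).matrix_mul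
      ((hF t ht).matrix_inv (hFinv t ht))).neg).sub (hB t ht).matrix_transpose
    refine (hderiv.congr_deriv (riccati_of_linear_second_order ?_ ?_ (hFode t ht) (hθdef t))
      ).congr_of_eventuallyEq (Filter.Eventually.of_forall hθdef)
    · exact mul_nonsing_inv _ ((isUnit_iff_isUnit_det _).mp (hFinv t ht))
    · exact nonsing_inv_mul _ ((isUnit_iff_isUnit_det _).mp (hqinv t ht))

/-- Proposition 1(ii): if `F` is a `C²` solution of the second-order linear ODE
`0 = (A - Ḃᵀ)F + (B - Bᵀ - q̇)Ḟ - q F̈` with `F T = I`, `Bᵀ F T + q Ḟ T = 0`,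
and `F t` is invertible for all `t`, then `θ := -q Ḟ F⁻¹ - Bᵀ` satisfies
`θ T = 0` and the Riccati equation `A + θ̇ = (B+θ) q⁻¹ (Bᵀ+θ)`. -/
theorem linear_to_riccati {n : ℕ} (T : ℝ) (hT : 0 ≤ T)
    (A B q A' B' q' F F' F'' : ℝ → Matrix (Fin n) (Fin n) ℝ)
    (hA : ∀ t ∈ Icc 0 T, HasDerivAt A (A' t) t)
    (hB : ∀ t ∈ Icc 0 T, HasDerivAt B (B' t) t)
    (hq : ∀ t ∈ Icc 0 T, HasDerivAt q (q' t) t)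
    (hqinv : ∀ t ∈ Icc 0 T, IsUnit (q t))
    (hF : ∀ t ∈ Icc 0 T, HasDerivAt F (F' t) t)
    (hF' : ∀ t ∈ Icc 0 T, HasDerivAt F' (F'' t) t)
    (hFode : ∀ t ∈ Icc 0 T,
        0 = (A t - (B' t)ᵀ) * F t + (B t - (B t)ᵀ - q' t) * F' t - q t * F'' t)
    (hFT : F T = 1)
    (hbc : (B T)ᵀ * F T + q T * F' T = 0)
    (hFinv : ∀ t ∈ Icc 0 T, IsUnit (F t))
    (θ : ℝ → Matrix (Fin n) (Fin n) ℝ)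
    (hθdef : ∀ t, θ t = -(q t * F' t * (F t)⁻¹) - (B t)ᵀ) :
    θ T = 0 ∧
      ∀ t ∈ Icc 0 T,
        HasDerivAt θ (-(A t) + (B t + θ t) * (q t)⁻¹ * ((B t)ᵀ + θ t)) t :=
  linear_to_riccati_general T A B q B' q' F F' F'' hB hq hqinv hF hF' hFode hFT hbc hFinv θ hθdef
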